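/- Let H be a functional spanning subgraph rooted at r of a digraph G (each vertex other than r has exactly one outgoing arc in H). Let W be a walk in G starting at r that avoids H (at each vertex it takes an unvisited arc outside H if one exists, otherwise the H-arc). If v is a vertex not lying on a cycle of H, and the walk W exhausts v (uses all arcs incident to v), then every vertex u in the subtree H_v of H converging to v is also exhausted by the prefix of W ending when v is exhausted. -/

import Mathlib

/-- The step relation of a subgraph `H` of a digraph. -/
def SubgraphStep {V E : Type*} (tl hd : E → V) (H : Set E) (x y : V) : Prop :=
  ∃ e ∈ H, tl e = x ∧ hd e = y

/-- A list of arcs `es` exhausts a vertex `v` if every arc having `v` as tail or head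
occurs in `es`. -/
def Exhausts {V E : Type*} (tl hd : E → V) (es : List E) (v : V) : Prop :=
  ∀ e : E, (tl e = v ∨ hd e = v) → e ∈ es

/-!
Induct along the `H`-path from `u` to `v`. Let `e` be the `H`-arc leaving a vertex `u ≠ r`
whose head is exhausted, so `e` has been walked. Since the walk avoids `H`, every other arc
leaving `u` was walked before `e`, so all out-arcs of `u` are used. A walk that does not start
at `u` enters `u` at least as often as it leaves it, and `u` is balanced, so all in-arcs of `u`
are used as well.
-/

section
variable {V E : Type*} (tl hd : E → V)

theorem countP_tl_le_countP_hd_add [DecidableEq V] :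
    ∀ {P : List E}, P.IsChain (fun e f => hd e = tl f) → ∀ u : V,
      P.countP (tl · = u) ≤ P.countP (hd · = u) + if P.head?.map tl = some u then 1 else 0
  | [], _, u => by simp
  | [e], _, u => by by_cases h : tl e = u <;> simp [h]
  | e :: f :: rest, hP, u => by
    rw [List.isChain_cons_cons] at hP
    have ih := countP_tl_le_countP_hd_add hP.2 u
    simp only [List.countP_cons, List.head?_cons, Option.map_some, Option.some.injEq,
      decide_eq_true_eq, ← hP.1] at ih ⊢
    split_ifs at ih ⊢ <;> omega

theorem countP_tl_take_le_countP_hd_take [DecidableEq V] {r u : V} {W : List E}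
    (hstart : W = [] ∨ W.head?.map tl = some r) (hchain : W.IsChain (fun e f => hd e = tl f))
    (hur : u ≠ r) (k : ℕ) :
    (W.take k).countP (tl · = u) ≤ (W.take k).countP (hd · = u) := by
  have hhead : (W.take k).head?.map tl ≠ some u := by
    rw [List.head?_take]
    split_ifs
    · simp
    · rcases hstart with rfl | h
      · simp
      · rw [h]; exact fun h' => hur (Option.some.inj h').symm
  simpa [hhead] using countP_tl_le_countP_hd_add tl hd (hchain.take k) u

theorem exhausts_of_forall_tl_mem [Fintype E] [DecidableEq V] {P : List E} (hP : P.Nodup)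
    {u : V}
    (hbal : (Finset.univ.filter fun e : E => tl e = u).card =
      (Finset.univ.filter fun e : E => hd e = u).card)
    (hflow : P.countP (tl · = u) ≤ P.countP (hd · = u))
    (hout : ∀ f : E, tl f = u → f ∈ P) :
    Exhausts tl hd P u := by
  classical
  have hcount : ∀ g : E → V, P.countP (g · = u) = (P.toFinset.filter (g · = u)).card := by
    intro g
    rw [List.countP_eq_length_filter, ← List.toFinset_card_of_nodup (hP.filter _),
      List.toFinset_filter]
    simp
  have hin : Finset.univ.filter (hd · = u) = P.toFinset.filter (hd · = u) := by
    refine (Finset.eq_of_subset_of_card_le (Finset.filter_subset_filter _ (Finset.subset_univ _))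
      ?_).symm
    calc (Finset.univ.filter (hd · = u)).card
        = (Finset.univ.filter (tl · = u)).card := hbal.symm
      _ ≤ (P.toFinset.filter (tl · = u)).card :=
          Finset.card_le_card fun f hf => by simp_all
      _ ≤ (P.toFinset.filter (hd · = u)).card := by rw [← hcount, ← hcount]; exact hflow
  rintro e (he | he)
  · exact hout e he
  · have : e ∈ P.toFinset.filter (hd · = u) := by rw [← hin]; simp [he]
    simpa using (Finset.mem_filter.mp this).1

theorem tl_mem_take_of_mem_take {r : V} {H : Set E} {W : List E}
    (hfun : ∀ v : V, v ≠ r → ∃! e : E, e ∈ H ∧ tl e = v)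
    (havoid : ∀ i (hi : i < W.length), W.get ⟨i, hi⟩ ∈ H →
      ∀ e : E, tl e = tl (W.get ⟨i, hi⟩) → e ∉ H → e ∈ W.take i)
    {e : E} (heH : e ∈ H) (her : tl e ≠ r) {k : ℕ} (hek : e ∈ W.take k)
    {f : E} (hf : tl f = tl e) : f ∈ W.take k := by
  by_cases hfH : f ∈ H
  · obtain rfl : f = e := (hfun (tl e) her).unique ⟨hfH, hf⟩ ⟨heH, rfl⟩
    exact hek
  · obtain ⟨i, hi, rfl⟩ := List.mem_take_iff_getElem.mp hek
    exact List.take_subset_take_left W (le_of_lt (lt_min_iff.mp hi).1)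
      (havoid i (lt_min_iff.mp hi).2 heH f hf hfH)

end

theorem exhausts_subtree {V E : Type*} [Fintype E] [DecidableEq V]
    (tl hd : E → V) (r : V) (H : Set E)
    -- H is a functional subgraph rooted at r
    (hfun : ∀ v : V, v ≠ r → ∃! e : E, e ∈ H ∧ tl e = v)
    (hroot : ∀ e ∈ H, tl e ≠ r)
    -- the digraph is Eulerian (balanced at every vertex)
    (hbal : ∀ v : V, (Finset.univ.filter fun e : E => tl e = v).card =
                     (Finset.univ.filter fun e : E => hd e = v).card)
    -- W is a walk starting at r
    (W : List E)
    (hstart : W = [] ∨ W.head?.map tl = some r)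
    (hchain : List.Chain' (fun e f => hd e = tl f) W)
    (hnodup : W.Nodup)
    -- W avoids H: the H-arc at a vertex is used only when every other outgoing arc
    -- of that vertex has already been visited
    (havoid : ∀ i (hi : i < W.length), W.get ⟨i, hi⟩ ∈ H →
      ∀ e : E, tl e = tl (W.get ⟨i, hi⟩) → e ∉ H → e ∈ W.take i)
    (v : V) :
    ∀ k ≤ W.length, Exhausts tl hd (W.take k) v →
      ∀ u : V, Relation.ReflTransGen (SubgraphStep tl hd H) u v →
        Exhausts tl hd (W.take k) u := by
  intro k _ hexv u hu
  induction hu using Relation.ReflTransGen.head_induction_on with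
  | refl => exact hexv
  | head hstep _ ih =>
    obtain ⟨e, heH, rfl, rfl⟩ := hstep
    have her := hroot e heH
    exact exhausts_of_forall_tl_mem tl hd (hnodup.sublist (List.take_sublist k W)) (hbal _)
      (countP_tl_take_le_countP_hd_take tl hd hstart hchain her k)
      fun f hf => tl_mem_take_of_mem_take tl hfun havoid heH her (ih e (Or.inr rfl)) hf
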